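/- arXiv:2203.01125 — 2 statements merged into one kernel-verified Lean document; each statement's English description precedes it below -/
import Mathlib

section
/- Let R be a nonzero ring and G a group of type FP₁(R) (i.e., the trivial RG-module R admits a projective resolution with the 0th and 1st terms finitely generated). Then G is finitely generated. -/
open CategoryTheory

/-- The augmentation map `RG → R` of the group ring, sending each group element
to `1` (i.e. summing coefficients). -/
noncomputable def augmentation (R G : Type) [Ring R] [Group G] :
    MonoidAlgebra R G →+* R :=
  MonoidAlgebra.liftNCRingHom (RingHom.id R) 1
    (fun x y => by simp)

/-- `R` as the trivial module over the group ring `RG`, via the augmentation. -/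
noncomputable def trivialModule (R G : Type) [Ring R] [Group G] :
    ModuleCat (MonoidAlgebra R G) :=
  letI : Module (MonoidAlgebra R G) R := (augmentation R G).toModule
  ModuleCat.of (MonoidAlgebra R G) R

/-- A group `G` is of type `FP_n(R)` if the trivial `RG`-module `R` admits a
projective resolution which is finitely generated in degrees `≤ n`. -/
def TypeFP (R G : Type) [Ring R] [Group G] (n : ℕ) : Prop :=
  ∃ res : ProjectiveResolution (trivialModule R G),
    ∀ i ≤ n, Module.Finite (MonoidAlgebra R G) (res.complex.X i)

namespace FP1Aux

variable {R G : Type} [Ring R] [Group G]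

lemma aug_single (g : G) (r : R) :
    augmentation R G (MonoidAlgebra.single g r) = r := by
  simp [augmentation, MonoidAlgebra.liftNCRingHom]

lemma aug_surjective : Function.Surjective (augmentation R G) :=
  fun r => ⟨MonoidAlgebra.single 1 r, aug_single 1 r⟩

/-- The augmentation as a morphism of `RG`-modules to the trivial module. -/
noncomputable def augHom (R G : Type) [Ring R] [Group G] :
    ModuleCat.of (MonoidAlgebra R G) (MonoidAlgebra R G) ⟶ trivialModule R G := ModuleCat.ofHom (Y := trivialModule R G)
  { toFun := augmentation R G
    map_add' x y := map_add _ x y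
    map_smul' c x := map_mul (augmentation R G) c x }

lemma mapDomain_sub' {α β M : Type*} [AddCommGroup M] (f : α → β) (x y : α →₀ M) :
    Finsupp.mapDomain f (x - y) = Finsupp.mapDomain f x - Finsupp.mapDomain f y :=
  map_sub (Finsupp.mapDomain.addMonoidHom f) x y

lemma mapDomain_mk_mul (H : Subgroup G) (c x : MonoidAlgebra R G)
    (hx : Finsupp.mapDomain (QuotientGroup.mk (s := H)) x.coeff = 0) :
    Finsupp.mapDomain (QuotientGroup.mk (s := H)) (c * x).coeff = 0 := by
  induction c using MonoidAlgebra.induction_linear with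
  | zero => rw [zero_mul, MonoidAlgebra.coeff_zero, Finsupp.mapDomain_zero]
  | add f g hf hg => rw [add_mul, MonoidAlgebra.coeff_add, Finsupp.mapDomain_add, hf, hg, add_zero]
  | single g r =>
    have h1 : ((MonoidAlgebra.single g r : MonoidAlgebra R G) * x).coeff
        = r • Finsupp.mapDomain (fun a => g * a) x.coeff := by
      ext a
      rw [MonoidAlgebra.coeff_single_mul_apply, Finsupp.smul_apply, smul_eq_mul]
      congr 1
      have h2 := Finsupp.mapDomain_apply (mul_right_injective g) x.coeff (g⁻¹ * a)
      rw [mul_inv_cancel_left] at h2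
      exact h2.symm
    have hcomp : (QuotientGroup.mk : G → G ⧸ H) ∘ (fun a => g * a)
        = (fun q => g • q) ∘ (QuotientGroup.mk : G → G ⧸ H) := funext fun a => rfl
    rw [h1, Finsupp.mapDomain_smul, ← Finsupp.mapDomain_comp, hcomp,
      Finsupp.mapDomain_comp, hx, Finsupp.mapDomain_zero, smul_zero]

lemma mapDomain_mk_eq_zero (H : Subgroup G) (t : MonoidAlgebra R G)
    (hsupp : ∀ g ∈ t.coeff.support, g ∈ H) (ht : augmentation R G t = 0) :
    Finsupp.mapDomain (QuotientGroup.mk (s := H)) t.coeff = 0 := by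
  classical
  have haug : augmentation R G t = t.coeff.sum fun _ b => b := by
    conv_lhs => rw [← MonoidAlgebra.ofCoeff_coeff t, ← Finsupp.sum_single t.coeff,
      MonoidAlgebra.ofCoeff_finsuppSum]
    rw [map_finsuppSum]
    exact Finsupp.sum_congr fun g _ => aug_single g (t.coeff g)
  have h1 : Finsupp.mapDomain (QuotientGroup.mk (s := H)) t.coeff
      = Finsupp.single (QuotientGroup.mk (s := H) (1 : G)) (augmentation R G t) := by
    rw [Finsupp.mapDomain, haug]
    rw [Finsupp.sum_congr (g2 := fun _ b => Finsupp.single (QuotientGroup.mk (s := H) (1 : G)) b)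
      (fun a ha => by
        rw [show QuotientGroup.mk (s := H) a = QuotientGroup.mk (s := H) (1 : G) from
          QuotientGroup.eq.mpr (by simpa using inv_mem (hsupp a ha))])]
    exact (map_finsuppSum (Finsupp.singleAddHom (QuotientGroup.mk (s := H) (1 : G))) t.coeff
      (fun _ b => b)).symm
  rw [h1, ht, Finsupp.single_zero]

lemma group_fg_of_span [Nontrivial R] (T : Finset (MonoidAlgebra R G))
    (hspan : ∀ x : MonoidAlgebra R G, augmentation R G x = 0 →
      x ∈ Submodule.span (MonoidAlgebra R G) (T : Set (MonoidAlgebra R G)))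
    (hker : ∀ t ∈ T, augmentation R G t = 0) : Group.FG G := by
  classical
  set S : Finset G := T.sup (fun t => t.coeff.support) with hS
  set H := Subgroup.closure (S : Set G) with hH
  let N : Submodule (MonoidAlgebra R G) (MonoidAlgebra R G) :=
    { carrier := {x | Finsupp.mapDomain (QuotientGroup.mk (s := H)) x.coeff = 0}
      add_mem' := fun {x y} hx hy => by
        simp only [Set.mem_setOf_eq] at *
        rw [MonoidAlgebra.coeff_add, Finsupp.mapDomain_add, hx, hy, add_zero]
      zero_mem' := Finsupp.mapDomain_zero
      smul_mem' := fun c x hx => mapDomain_mk_mul H c x hx }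
  have hTN : (T : Set (MonoidAlgebra R G)) ⊆ N := by
    intro t ht
    refine mapDomain_mk_eq_zero H t (fun g hg => Subgroup.subset_closure ?_)
      (hker t (Finset.mem_coe.mp ht))
    have hsub : t.coeff.support ⊆ S := Finset.le_sup (f := fun t => t.coeff.support) (Finset.mem_coe.mp ht)
    exact Finset.mem_coe.mpr (hsub hg)
  have key : ∀ g : G, g ∈ H := by
    intro g
    have hx : augmentation R G
        (MonoidAlgebra.single g 1 - MonoidAlgebra.single (1 : G) (1 : R)) = 0 := by
      rw [map_sub, aug_single, aug_single, sub_self]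
    have hmem : (MonoidAlgebra.single g 1 - MonoidAlgebra.single (1 : G) (1 : R)) ∈ N :=
      Submodule.span_le.mpr hTN (hspan _ hx)
    have h0 : Finsupp.mapDomain (QuotientGroup.mk (s := H))
        (MonoidAlgebra.single g (1 : R) - MonoidAlgebra.single (1 : G) (1 : R)).coeff = 0 := hmem
    rw [MonoidAlgebra.coeff_sub, mapDomain_sub', sub_eq_zero] at h0
    have h2 : Finsupp.single (QuotientGroup.mk (s := H) g) (1 : R)
        = Finsupp.single (QuotientGroup.mk (s := H) (1 : G)) (1 : R) := by
      simpa [Finsupp.mapDomain.addMonoidHom_apply, Finsupp.mapDomain_single, MonoidAlgebra.coeff_single] using h0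
    rcases Finsupp.single_eq_single_iff _ _ _ _ |>.mp h2 with ⟨hq, -⟩ | ⟨h, -⟩
    · have := QuotientGroup.eq.mp hq
      rw [mul_one] at this
      exact inv_mem_iff.mp this
    · exact absurd h one_ne_zero
  refine Group.fg_iff.mpr ⟨(S : Set G), ?_, S.finite_toSet⟩
  rw [← hH]
  exact (Subgroup.eq_top_iff' H).mpr key

end FP1Aux

/-- If `R` is a nonzero ring and `G` is of type `FP₁(R)` (the trivial module
`R` has a projective `RG`-resolution with `P₀` and `P₁` finitely generated),
then `G` is finitely generated. -/
theorem stmt_2 (R G : Type) [Ring R] [Nontrivial R] [Group G]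
    (h : TypeFP R G 1) : Group.FG G := by
  classical
  obtain ⟨res, hfin⟩ := h
  haveI h0 : Module.Finite (MonoidAlgebra R G) (res.complex.X 0) := hfin 0 (by omega)
  haveI h1 : Module.Finite (MonoidAlgebra R G) (res.complex.X 1) := hfin 1 le_rfl
  let a : ModuleCat.of (MonoidAlgebra R G) (MonoidAlgebra R G) ⟶ trivialModule R G :=
    FP1Aux.augHom R G
  haveI : Epi a :=
    (ModuleCat.epi_iff_surjective a).mpr
      (fun r => ⟨MonoidAlgebra.single (1 : G) (show R from r), FP1Aux.aug_single (G := G) 1 (show R from r)⟩)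
  haveI : Projective (ModuleCat.of (MonoidAlgebra R G) (MonoidAlgebra R G)) :=
    ModuleCat.projective_of_free (Module.Basis.singleton Unit (MonoidAlgebra R G))
  let e : res.complex.X 0 ⟶ trivialModule R G := res.π.f 0
  haveI : Epi e := inferInstanceAs (Epi (res.π.f 0))
  let f : res.complex.X 0 ⟶ ModuleCat.of (MonoidAlgebra R G) (MonoidAlgebra R G) :=
    Projective.factorThru e a
  have hf : f ≫ a = e := Projective.factorThru_comp e a
  let σ : ModuleCat.of (MonoidAlgebra R G) (MonoidAlgebra R G) ⟶ res.complex.X 0 :=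
    Projective.factorThru a e
  have hσ : σ ≫ e = a := Projective.factorThru_comp a e
  let F : res.complex.X 0 →ₗ[MonoidAlgebra R G] MonoidAlgebra R G := f.hom
  let s' : MonoidAlgebra R G →ₗ[MonoidAlgebra R G] res.complex.X 0 := σ.hom
  let d' : res.complex.X 1 →ₗ[MonoidAlgebra R G] res.complex.X 0 := (res.complex.d 1 0).hom
  have hrange : LinearMap.range d' = LinearMap.ker e.hom :=
    res.exact₀.moduleCat_range_eq_ker
  let u : MonoidAlgebra R G →ₗ[MonoidAlgebra R G] MonoidAlgebra R G :=
    LinearMap.id - F.comp s'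
  let φ : (res.complex.X 1 × MonoidAlgebra R G) →ₗ[MonoidAlgebra R G] MonoidAlgebra R G :=
    LinearMap.coprod (F.comp d') u
  have he_d : ∀ p, e (d' p) = 0 := fun p => by
    show (res.complex.d 1 0 ≫ res.π.f 0) p = 0
    rw [res.complex_d_comp_π_f_zero]
    rfl
  have hFa : ∀ y, a (F y) = e y := fun y => congrArg (fun φ => φ.hom y) hf
  have hs'e : ∀ x, e (s' x) = a x := fun x => congrArg (fun φ => φ.hom x) hσ
  have hkera : LinearMap.ker a.hom = LinearMap.range φ := by
    apply le_antisymm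
    · intro x hx
      have hx' : e (s' x) = 0 := by rw [hs'e]; exact hx
      have hmem : s' x ∈ LinearMap.range d' := by
        rw [hrange]
        exact LinearMap.mem_ker.mpr hx'
      obtain ⟨p, hp⟩ := hmem
      refine ⟨(p, x), ?_⟩
      show F (d' p) + ((show MonoidAlgebra R G from x) - F (s' x)) = x
      rw [hp]
      abel
    · rintro _ ⟨⟨p, x⟩, rfl⟩
      refine LinearMap.mem_ker.mpr ?_
      show a (F (d' p) + ((show MonoidAlgebra R G from x) - F (s' x))) = 0
      rw [map_add, map_sub, hFa, hFa, he_d, hs'e, zero_add, sub_self]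
  have hKfg : (LinearMap.ker a.hom).FG := by
    rw [hkera, LinearMap.range_eq_map]
    exact Submodule.FG.map _ (Module.finite_def.mp inferInstance)
  obtain ⟨T, hT⟩ := hKfg
  let T' : Finset (MonoidAlgebra R G) := T
  have hT' : Submodule.span (MonoidAlgebra R G) (↑T' : Set (MonoidAlgebra R G))
      = LinearMap.ker a.hom := hT
  refine FP1Aux.group_fg_of_span T' (fun x hx => ?_) (fun t ht => ?_)
  · rw [hT']
    exact LinearMap.mem_ker.mpr (show a x = 0 from hx)
  · exact show a t = 0 from LinearMap.mem_ker.mp (hT' ▸ Submodule.subset_span ht)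
end

section
/- Let G be a group, χ : G → ℝ a character, and R a ring. Then the Novikov set \widehat{RG}^χ of formal sums Σ r_g g over G with coefficients in R whose support has finite intersection with χ⁻¹((−∞, t]) for every real t, is closed under addition and under the convolution product, and forms an associative unital ring. -/
/-- The underlying set of the Novikov ring: functions `f : G → R` whose support
has finite intersection with `χ⁻¹((-∞, t])` for every `t : ℝ`. -/
def NovikovSet (G : Type*) [Group G] (R : Type*) [Ring R] (χ : G → ℝ) :
    Set (G → R) :=
  {f | ∀ t : ℝ, {g : G | f g ≠ 0 ∧ χ g ≤ t}.Finite}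

/-- Convolution product of two functions `G → R` (defined via `finsum`, which
gives the junk value `0` if the relevant support is infinite). -/
noncomputable def novikovMul {G R : Type*} [Group G] [Ring R] (f h : G → R) :
    G → R :=
  fun g => ∑ᶠ p : {p : G × G // p.1 * p.2 = g}, f p.val.1 * h p.val.2

/-- A ring structure on a set of functions `G → R` is the Novikov ring
structure if addition is pointwise, multiplication is convolution, and the unit
is the Dirac function at `1 ∈ G`. -/
def IsNovikovRingStructure {G R : Type*} [Group G] [Ring R]
    (S : Set (G → R)) [Ring ↥S] : Prop :=
  (∀ a b : ↥S, ((a + b : ↥S) : G → R) = fun g => a.val g + b.val g) ∧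
  (∀ a b : ↥S, ((a * b : ↥S) : G → R) = novikovMul a.val b.val) ∧
  (∀ g : G, ((1 : ↥S) : G → R) g = open Classical in if g = (1 : G) then (1 : R) else 0)

open Function

section Aux

variable {G : Type*} [Group G] {R : Type*} [Ring R] {χ : G → ℝ}

/-- The character is bounded below on the support of an element of the Novikov set. -/
lemma nov_bdd {f : G → R} (hf : f ∈ NovikovSet G R χ) :
    ∃ m : ℝ, ∀ a, f a ≠ 0 → m ≤ χ a := by
  obtain ⟨m, hm⟩ := ((hf 0).image χ).bddBelow
  refine ⟨min m 0, fun a ha => ?_⟩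
  rcases le_or_gt (χ a) 0 with h0 | h0
  · exact le_trans (min_le_left _ _) (hm ⟨a, ⟨ha, h0⟩, rfl⟩)
  · exact le_trans (min_le_right _ _) h0.le

lemma nov_pair_finite (hχ : ∀ a b : G, χ (a * b) = χ a + χ b)
    {f h : G → R} (hf : f ∈ NovikovSet G R χ) (hh : h ∈ NovikovSet G R χ) (g : G) :
    {p : G × G | p.1 * p.2 = g ∧ f p.1 ≠ 0 ∧ h p.2 ≠ 0}.Finite := by
  obtain ⟨mf, hmf⟩ := nov_bdd hf
  obtain ⟨mh, hmh⟩ := nov_bdd hh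
  refine ((hf (χ g - mh)).prod (hh (χ g - mf))).subset ?_
  rintro ⟨a, b⟩ ⟨hg, ha, hb⟩
  have e : χ a + χ b = χ g := by rw [← hg, hχ]
  have h1 := hmf a ha
  have h2 := hmh b hb
  exact ⟨⟨ha, by linarith⟩, ⟨hb, by linarith⟩⟩

lemma nov_triple_finite (hχ : ∀ a b : G, χ (a * b) = χ a + χ b)
    {f h k : G → R} (hf : f ∈ NovikovSet G R χ) (hh : h ∈ NovikovSet G R χ)
    (hk : k ∈ NovikovSet G R χ) (g : G) :
    {r : G × G × G | r.1 * r.2.1 * r.2.2 = g ∧ f r.1 ≠ 0 ∧ h r.2.1 ≠ 0 ∧ k r.2.2 ≠ 0}.Finite := by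
  obtain ⟨mf, hmf⟩ := nov_bdd hf
  obtain ⟨mh, hmh⟩ := nov_bdd hh
  obtain ⟨mk, hmk⟩ := nov_bdd hk
  refine ((hf (χ g - mh - mk)).prod ((hh (χ g - mf - mk)).prod
    (hk (χ g - mf - mh)))).subset ?_
  rintro ⟨a, b, c⟩ ⟨hg, ha, hb, hc⟩
  have e : χ a + χ b + χ c = χ g := by rw [← hg, hχ, hχ]
  have h1 := hmf a ha
  have h2 := hmh b hb
  have h3 := hmk c hc
  exact ⟨⟨ha, by linarith⟩, ⟨hb, by linarith⟩, ⟨hc, by linarith⟩⟩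

open Classical in
lemma novikovMul_apply (f h : G → R) (g : G) :
    novikovMul f h g = ∑ᶠ p : G × G, if p.1 * p.2 = g then f p.1 * h p.2 else 0 := by
  classical
  exact (finsum_subtype_eq_finsum_cond (f := fun q : G × G => f q.1 * h q.2)
    (fun q : G × G => q.1 * q.2 = g)).trans (finsum_congr fun q => finsum_eq_if)

open Classical in
lemma novikovMul_eq_sum (f h : G → R) (g : G) (A : Finset (G × G))
    (hA : ∀ p : G × G, p.1 * p.2 = g → f p.1 ≠ 0 → h p.2 ≠ 0 → p ∈ A) :
    novikovMul f h g = ∑ p ∈ A, if p.1 * p.2 = g then f p.1 * h p.2 else 0 := by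
  classical
  rw [novikovMul_apply]
  refine finsum_eq_finset_sum_of_support_subset _ ?_
  intro p hp
  rw [mem_support] at hp
  by_cases hpg : p.1 * p.2 = g
  · rw [if_pos hpg] at hp
    have hf0 : f p.1 ≠ 0 := fun h0 => hp (by rw [h0, zero_mul])
    have hh0 : h p.2 ≠ 0 := fun h0 => hp (by rw [h0, mul_zero])
    exact hA p hpg hf0 hh0
  · exact absurd (if_neg hpg) hp

lemma novikovMul_exists_ne_zero {f h : G → R} {g : G} (hg : novikovMul f h g ≠ 0) :
    ∃ p : G × G, p.1 * p.2 = g ∧ f p.1 ≠ 0 ∧ h p.2 ≠ 0 := by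
  classical
  by_contra hc
  push_neg at hc
  apply hg
  rw [novikovMul_apply]
  apply finsum_eq_zero_of_forall_eq_zero
  intro p
  by_cases h1 : p.1 * p.2 = g
  · rw [if_pos h1]
    by_cases h2 : f p.1 = 0
    · rw [h2, zero_mul]
    · rw [hc p h1 h2, mul_zero]
  · exact if_neg h1

lemma nov_add_mem {f h : G → R} (hf : f ∈ NovikovSet G R χ) (hh : h ∈ NovikovSet G R χ) :
    (fun g => f g + h g) ∈ NovikovSet G R χ := by
  intro t
  refine ((hf t).union (hh t)).subset ?_
  intro g ⟨hg, hgt⟩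
  by_cases h0 : f g = 0
  · exact Or.inr ⟨fun h1 => hg (show f g + h g = 0 by rw [h0, h1, add_zero]), hgt⟩
  · exact Or.inl ⟨h0, hgt⟩

lemma nov_zero_mem : (0 : G → R) ∈ NovikovSet G R χ := by
  intro t
  convert Set.finite_empty
  ext g
  simp

lemma nov_neg_mem {f : G → R} (hf : f ∈ NovikovSet G R χ) :
    (fun g => -(f g)) ∈ NovikovSet G R χ := by
  intro t
  refine (hf t).subset ?_
  intro g ⟨hg, hgt⟩
  exact ⟨fun h0 => hg (show -(f g) = 0 by rw [h0, neg_zero]), hgt⟩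

open Classical in
lemma nov_one_mem : (fun g : G => if g = (1 : G) then (1 : R) else 0) ∈ NovikovSet G R χ := by
  intro t
  refine (Set.finite_singleton (1 : G)).subset ?_
  intro g ⟨hg, _⟩
  by_contra h0
  exact hg (if_neg h0)

lemma novikovMul_mem (hχ : ∀ a b : G, χ (a * b) = χ a + χ b)
    {f h : G → R} (hf : f ∈ NovikovSet G R χ) (hh : h ∈ NovikovSet G R χ) :
    novikovMul f h ∈ NovikovSet G R χ := by
  intro t
  obtain ⟨mf, hmf⟩ := nov_bdd hf
  obtain ⟨mh, hmh⟩ := nov_bdd hh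
  refine (((hf (t - mh)).prod (hh (t - mf))).image (fun p : G × G => p.1 * p.2)).subset ?_
  rintro g ⟨hg, hgt⟩
  obtain ⟨⟨a, b⟩, hab, ha, hb⟩ := novikovMul_exists_ne_zero hg
  have e : χ a + χ b = χ g := by rw [← hab, hχ]
  have h1 := hmf a ha
  have h2 := hmh b hb
  exact ⟨(a, b), ⟨⟨ha, by linarith⟩, ⟨hb, by linarith⟩⟩, hab⟩

open Classical in
lemma novikovMul_one_left (f : G → R) :
    novikovMul (fun g : G => if g = (1 : G) then (1 : R) else 0) f = f := by
  funext g
  rw [novikovMul_eq_sum _ f g {((1 : G), g)} ?_]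
  · simp
  · rintro ⟨a, b⟩ h1 h2 _
    have ha : a = 1 := by by_contra h0; exact h2 (if_neg h0)
    subst ha
    rw [one_mul] at h1
    subst h1
    simp

open Classical in
lemma novikovMul_one_right (f : G → R) :
    novikovMul f (fun g : G => if g = (1 : G) then (1 : R) else 0) = f := by
  funext g
  rw [novikovMul_eq_sum f _ g {(g, (1 : G))} ?_]
  · simp
  · rintro ⟨a, b⟩ h1 _ h3
    have hb : b = 1 := by by_contra h0; exact h3 (if_neg h0)
    subst hb
    rw [mul_one] at h1
    subst h1
    simp

lemma novikovMul_zero_left (f : G → R) : novikovMul (0 : G → R) f = 0 := by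
  classical
  funext g
  rw [novikovMul_apply]
  apply finsum_eq_zero_of_forall_eq_zero
  intro p
  simp

lemma novikovMul_zero_right (f : G → R) : novikovMul f (0 : G → R) = 0 := by
  classical
  funext g
  rw [novikovMul_apply]
  apply finsum_eq_zero_of_forall_eq_zero
  intro p
  simp

lemma novikovMul_add_right (hχ : ∀ a b : G, χ (a * b) = χ a + χ b)
    {f h k : G → R} (hf : f ∈ NovikovSet G R χ) (hh : h ∈ NovikovSet G R χ)
    (hk : k ∈ NovikovSet G R χ) :
    novikovMul f (fun x => h x + k x) = fun g => novikovMul f h g + novikovMul f k g := by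
  classical
  funext g
  set A := (nov_pair_finite hχ hf hh g).toFinset ∪ (nov_pair_finite hχ hf hk g).toFinset with hA
  have memA : ∀ p : G × G, p.1 * p.2 = g → f p.1 ≠ 0 → (h p.2 ≠ 0 ∨ k p.2 ≠ 0) → p ∈ A := by
    intro p h1 h2 h3
    rw [hA, Finset.mem_union, Set.Finite.mem_toFinset, Set.Finite.mem_toFinset]
    rcases h3 with h3 | h3
    · exact Or.inl ⟨h1, h2, h3⟩
    · exact Or.inr ⟨h1, h2, h3⟩
  rw [novikovMul_eq_sum f (fun x => h x + k x) g A ?_,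
    novikovMul_eq_sum f h g A (fun p h1 h2 h3 => memA p h1 h2 (Or.inl h3)),
    novikovMul_eq_sum f k g A (fun p h1 h2 h3 => memA p h1 h2 (Or.inr h3)),
    ← Finset.sum_add_distrib]
  · apply Finset.sum_congr rfl
    intro p _
    by_cases hp : p.1 * p.2 = g
    · simp [hp, mul_add]
    · simp [hp]
  · intro p h1 h2 h3
    refine memA p h1 h2 ?_
    by_contra h0
    push_neg at h0
    exact h3 (show h p.2 + k p.2 = 0 by rw [h0.1, h0.2, add_zero])

lemma novikovMul_add_left (hχ : ∀ a b : G, χ (a * b) = χ a + χ b)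
    {f h k : G → R} (hf : f ∈ NovikovSet G R χ) (hh : h ∈ NovikovSet G R χ)
    (hk : k ∈ NovikovSet G R χ) :
    novikovMul (fun x => f x + h x) k = fun g => novikovMul f k g + novikovMul h k g := by
  classical
  funext g
  set A := (nov_pair_finite hχ hf hk g).toFinset ∪ (nov_pair_finite hχ hh hk g).toFinset with hA
  have memA : ∀ p : G × G, p.1 * p.2 = g → (f p.1 ≠ 0 ∨ h p.1 ≠ 0) → k p.2 ≠ 0 → p ∈ A := by
    intro p h1 h2 h3
    rw [hA, Finset.mem_union, Set.Finite.mem_toFinset, Set.Finite.mem_toFinset]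
    rcases h2 with h2 | h2
    · exact Or.inl ⟨h1, h2, h3⟩
    · exact Or.inr ⟨h1, h2, h3⟩
  rw [novikovMul_eq_sum (fun x => f x + h x) k g A ?_,
    novikovMul_eq_sum f k g A (fun p h1 h2 h3 => memA p h1 (Or.inl h2) h3),
    novikovMul_eq_sum h k g A (fun p h1 h2 h3 => memA p h1 (Or.inr h2) h3),
    ← Finset.sum_add_distrib]
  · apply Finset.sum_congr rfl
    intro p _
    by_cases hp : p.1 * p.2 = g
    · simp [hp, add_mul]
    · simp [hp]
  · intro p h1 h2 h3
    refine memA p h1 ?_ h3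
    by_contra h0
    push_neg at h0
    exact h2 (show f p.1 + h p.1 = 0 by rw [h0.1, h0.2, add_zero])

lemma novikovMul_assoc (hχ : ∀ a b : G, χ (a * b) = χ a + χ b)
    {f h k : G → R} (hf : f ∈ NovikovSet G R χ) (hh : h ∈ NovikovSet G R χ)
    (hk : k ∈ NovikovSet G R χ) :
    novikovMul (novikovMul f h) k = novikovMul f (novikovMul h k) := by
  classical
  funext g
  have hT := nov_triple_finite hχ hf hh hk g
  set Tf := hT.toFinset with hTf
  set F : (G × G) × (G × G) → R := fun z =>
    if z.1.1 * z.1.2 = g ∧ z.2.1 * z.2.2 = z.1.1 then f z.2.1 * h z.2.2 * k z.1.2 else 0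
    with hF
  set F' : (G × G) × (G × G) → R := fun z =>
    if z.1.1 * z.1.2 = g ∧ z.2.1 * z.2.2 = z.1.2 then f z.1.1 * (h z.2.1 * k z.2.2) else 0
    with hF'
  -- facts about the supports of F and F'
  have hFmem : ∀ z : (G × G) × (G × G), F z ≠ 0 →
      (z.2.1, z.2.2, z.1.2) ∈ Tf ∧
        (((z.2.1 * z.2.2, z.1.2), (z.2.1, z.2.2)) : (G × G) × (G × G)) = z := by
    rintro ⟨⟨x1, x2⟩, y1, y2⟩ hz
    rw [hF] at hz
    simp only at hz
    by_cases hc : x1 * x2 = g ∧ y1 * y2 = x1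
    · rw [if_pos hc] at hz
      have h1 : f y1 ≠ 0 := left_ne_zero_of_mul (left_ne_zero_of_mul hz)
      have h2 : h y2 ≠ 0 := right_ne_zero_of_mul (left_ne_zero_of_mul hz)
      have h3 : k x2 ≠ 0 := right_ne_zero_of_mul hz
      constructor
      · rw [hTf, Set.Finite.mem_toFinset]
        exact ⟨by rw [hc.2, hc.1], h1, h2, h3⟩
      · simp [hc.2]
    · exact absurd (if_neg hc) hz
  have hF'mem : ∀ z : (G × G) × (G × G), F' z ≠ 0 →
      (z.1.1, z.2.1, z.2.2) ∈ Tf ∧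
        (((z.1.1, z.2.1 * z.2.2), (z.2.1, z.2.2)) : (G × G) × (G × G)) = z := by
    rintro ⟨⟨x1, x2⟩, y1, y2⟩ hz
    rw [hF'] at hz
    simp only at hz
    by_cases hc : x1 * x2 = g ∧ y1 * y2 = x2
    · rw [if_pos hc] at hz
      have h1 : f x1 ≠ 0 := left_ne_zero_of_mul hz
      have h2 : h y1 ≠ 0 := left_ne_zero_of_mul (right_ne_zero_of_mul hz)
      have h3 : k y2 ≠ 0 := right_ne_zero_of_mul (right_ne_zero_of_mul hz)
      constructor
      · rw [hTf, Set.Finite.mem_toFinset]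
        refine ⟨?_, h1, h2, h3⟩
        rw [mul_assoc, hc.2, hc.1]
      · simp [hc.2]
    · exact absurd (if_neg hc) hz
  have hsuppF : (support F).Finite := by
    refine (hT.image (fun r : G × G × G => ((r.1 * r.2.1, r.2.2), (r.1, r.2.1)))).subset ?_
    intro z hz
    rw [mem_support] at hz
    obtain ⟨hmem, heq⟩ := hFmem z hz
    rw [hTf, Set.Finite.mem_toFinset] at hmem
    exact ⟨(z.2.1, z.2.2, z.1.2), hmem, heq⟩
  have hsuppF' : (support F').Finite := by
    refine (hT.image (fun r : G × G × G => ((r.1, r.2.1 * r.2.2), (r.2.1, r.2.2)))).subset ?_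
    intro z hz
    rw [mem_support] at hz
    obtain ⟨hmem, heq⟩ := hF'mem z hz
    rw [hTf, Set.Finite.mem_toFinset] at hmem
    exact ⟨(z.1.1, z.2.1, z.2.2), hmem, heq⟩
  -- LHS as a double finsum
  have hL1 : novikovMul (novikovMul f h) k g = ∑ᶠ (p : G × G) (q : G × G), F (p, q) := by
    rw [novikovMul_apply]
    refine finsum_congr fun p => ?_
    by_cases hp : p.1 * p.2 = g
    · rw [if_pos hp, novikovMul_apply f h p.1]
      rw [finsum_mul' _ (k p.2) ((nov_pair_finite hχ hf hh p.1).subset ?_)]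
      · refine finsum_congr fun q => ?_
        by_cases hq : q.1 * q.2 = p.1
        · rw [if_pos hq, hF]
          simp only
          rw [if_pos ⟨hp, hq⟩]
        · rw [if_neg hq, zero_mul, hF]
          simp only
          rw [if_neg (fun hc => hq hc.2)]
      · intro q hq
        rw [mem_support] at hq
        by_cases hq1 : q.1 * q.2 = p.1
        · rw [if_pos hq1] at hq
          exact ⟨hq1, left_ne_zero_of_mul hq, right_ne_zero_of_mul hq⟩
        · exact absurd (if_neg hq1) hq
    · rw [if_neg hp]
      symm
      apply finsum_eq_zero_of_forall_eq_zero
      intro q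
      rw [hF]
      simp only
      rw [if_neg (fun hc => hp hc.1)]
  -- RHS as a double finsum
  have hR1 : novikovMul f (novikovMul h k) g = ∑ᶠ (p : G × G) (q : G × G), F' (p, q) := by
    rw [novikovMul_apply]
    refine finsum_congr fun p => ?_
    by_cases hp : p.1 * p.2 = g
    · rw [if_pos hp, novikovMul_apply h k p.2]
      rw [mul_finsum' _ (f p.1) ((nov_pair_finite hχ hh hk p.2).subset ?_)]
      · refine finsum_congr fun q => ?_
        by_cases hq : q.1 * q.2 = p.2
        · rw [if_pos hq, hF']
          simp only
          rw [if_pos ⟨hp, hq⟩]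
        · rw [if_neg hq, mul_zero, hF']
          simp only
          rw [if_neg (fun hc => hq hc.2)]
      · intro q hq
        rw [mem_support] at hq
        by_cases hq1 : q.1 * q.2 = p.2
        · rw [if_pos hq1] at hq
          exact ⟨hq1, left_ne_zero_of_mul hq, right_ne_zero_of_mul hq⟩
        · exact absurd (if_neg hq1) hq
    · rw [if_neg hp]
      symm
      apply finsum_eq_zero_of_forall_eq_zero
      intro q
      rw [hF']
      simp only
      rw [if_neg (fun hc => hp hc.1)]
  -- both sides equal the sum over Tf
  have e1inj : Injective (fun r : G × G × G => ((r.1 * r.2.1, r.2.2), (r.1, r.2.1))) := by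
    rintro ⟨a, b, c⟩ ⟨a', b', c'⟩ hr
    simp only [Prod.mk.injEq] at hr
    obtain ⟨⟨-, h2⟩, h3, h4⟩ := hr
    simp [h2, h3, h4]
  have e2inj : Injective (fun r : G × G × G => ((r.1, r.2.1 * r.2.2), (r.2.1, r.2.2))) := by
    rintro ⟨a, b, c⟩ ⟨a', b', c'⟩ hr
    simp only [Prod.mk.injEq] at hr
    obtain ⟨⟨h1, -⟩, h3, h4⟩ := hr
    simp [h1, h3, h4]
  have hL2 : ∑ᶠ z : (G × G) × (G × G), F z = ∑ r ∈ Tf, f r.1 * h r.2.1 * k r.2.2 := by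
    rw [finsum_eq_finset_sum_of_support_subset F
      (s := Tf.image (fun r : G × G × G => ((r.1 * r.2.1, r.2.2), (r.1, r.2.1)))) ?_]
    · rw [Finset.sum_image (fun r _ r' _ hrr => e1inj hrr)]
      apply Finset.sum_congr rfl
      intro r hr
      rw [hTf, Set.Finite.mem_toFinset] at hr
      obtain ⟨hg1, hf1, hh1, hk1⟩ := hr
      simp [hF, hg1]
    · intro z hz
      rw [mem_support] at hz
      obtain ⟨hmem, heq⟩ := hFmem z hz
      rw [Finset.coe_image]
      exact ⟨(z.2.1, z.2.2, z.1.2), hmem, heq⟩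
  have hR2 : ∑ᶠ z : (G × G) × (G × G), F' z = ∑ r ∈ Tf, f r.1 * (h r.2.1 * k r.2.2) := by
    rw [finsum_eq_finset_sum_of_support_subset F'
      (s := Tf.image (fun r : G × G × G => ((r.1, r.2.1 * r.2.2), (r.2.1, r.2.2)))) ?_]
    · rw [Finset.sum_image (fun r _ r' _ hrr => e2inj hrr)]
      apply Finset.sum_congr rfl
      intro r hr
      rw [hTf, Set.Finite.mem_toFinset] at hr
      obtain ⟨hg1, hf1, hh1, hk1⟩ := hr
      simp [hF', ← mul_assoc, hg1]
    · intro z hz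
      rw [mem_support] at hz
      obtain ⟨hmem, heq⟩ := hF'mem z hz
      rw [Finset.coe_image]
      exact ⟨(z.1.1, z.2.1, z.2.2), hmem, heq⟩
  rw [hL1, hR1, ← finsum_curry F hsuppF, ← finsum_curry F' hsuppF', hL2, hR2]
  apply Finset.sum_congr rfl
  intro r _
  rw [mul_assoc]

end Aux

instance novikovAdd (G : Type*) [Group G] (R : Type*) [Ring R] (χ : G → ℝ) :
    Add ↥(NovikovSet G R χ) :=
  ⟨fun a b => ⟨fun g => a.1 g + b.1 g, nov_add_mem a.2 b.2⟩⟩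

instance novikovZero (G : Type*) [Group G] (R : Type*) [Ring R] (χ : G → ℝ) :
    Zero ↥(NovikovSet G R χ) :=
  ⟨⟨0, nov_zero_mem⟩⟩

instance novikovNeg (G : Type*) [Group G] (R : Type*) [Ring R] (χ : G → ℝ) :
    Neg ↥(NovikovSet G R χ) :=
  ⟨fun a => ⟨fun g => -(a.1 g), nov_neg_mem a.2⟩⟩

/-- The additive group structure on the Novikov set. -/
noncomputable def novikovAddCommGroup (G : Type*) [Group G] (R : Type*) [Ring R] (χ : G → ℝ) :
    AddCommGroup ↥(NovikovSet G R χ) where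
  add a b := a + b
  add_assoc a b c := Subtype.ext (funext fun g => add_assoc _ _ _)
  zero := 0
  zero_add a := Subtype.ext (funext fun g => zero_add _)
  add_zero a := Subtype.ext (funext fun g => add_zero _)
  nsmul := nsmulRec
  neg a := -a
  zsmul := zsmulRec
  neg_add_cancel a := Subtype.ext (funext fun g => neg_add_cancel _)
  add_comm a b := Subtype.ext (funext fun g => add_comm _ _)

open Classical in
/-- The Novikov ring structure. -/
noncomputable def novikovRing (G : Type*) [Group G] (R : Type*) [Ring R] (χ : G → ℝ)
    (hχ : ∀ a b : G, χ (a * b) = χ a + χ b) : Ring ↥(NovikovSet G R χ) :=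
  { novikovAddCommGroup G R χ with
    mul := fun a b => ⟨novikovMul a.1 b.1, novikovMul_mem hχ a.2 b.2⟩
    one := ⟨fun g => if g = (1 : G) then (1 : R) else 0, nov_one_mem⟩
    mul_assoc := fun a b c => Subtype.ext (novikovMul_assoc hχ a.2 b.2 c.2)
    one_mul := fun a => Subtype.ext (novikovMul_one_left a.1)
    mul_one := fun a => Subtype.ext (novikovMul_one_right a.1)
    left_distrib := fun a b c => Subtype.ext (novikovMul_add_right hχ a.2 b.2 c.2)
    right_distrib := fun a b c => Subtype.ext (novikovMul_add_left hχ a.2 b.2 c.2)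
    zero_mul := fun a => Subtype.ext (novikovMul_zero_left a.1)
    mul_zero := fun a => Subtype.ext (novikovMul_zero_right a.1) }

/-- The Novikov set is closed under pointwise addition and under convolution
(which is well defined, i.e. given by finitely supported sums), and it forms an
associative unital ring with these operations. -/
theorem stmt_6 {G : Type*} [Group G] (R : Type*) [Ring R] (χ : G → ℝ)
    (hχ : ∀ a b : G, χ (a * b) = χ a + χ b) :
    (∀ f h : G → R, f ∈ NovikovSet G R χ → h ∈ NovikovSet G R χ →
      (fun g => f g + h g) ∈ NovikovSet G R χ) ∧
    (∀ f h : G → R, f ∈ NovikovSet G R χ → h ∈ NovikovSet G R χ →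
      (∀ g : G, {p : G × G | p.1 * p.2 = g ∧ f p.1 ≠ 0 ∧ h p.2 ≠ 0}.Finite) ∧
        novikovMul f h ∈ NovikovSet G R χ) ∧
    (∃ inst : Ring ↥(NovikovSet G R χ),
      @IsNovikovRingStructure G R _ _ (NovikovSet G R χ) inst) := by
  refine ⟨fun f h hf hh => nov_add_mem hf hh,
    fun f h hf hh => ⟨nov_pair_finite hχ hf hh, novikovMul_mem hχ hf hh⟩,
    ⟨novikovRing G R χ hχ, fun a b => rfl, fun a b => rfl, fun g => rfl⟩⟩
end
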